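/- For an irreducible finite Markov chain (B, Prob_B) started from any initial distribution ν, the empirical frequency vector Freq_n converges almost surely to the invariant distribution I_B: P^ν[lim_n Freq_n = I_B] = 1. -/

import Mathlib

/-!
Fix a state `s` and centre its indicator, `f = 𝟙_s - I s`, so that `I ⬝ᵥ f = 0`. Irreducibility
forces harmonic functions to be constant, so the fundamental matrix `1 - P + 𝟙 Iᵀ` is invertible
and the Poisson equation `h - P h = f` has a solution; hence the partial sums
`∑_{d<m} P^d f = h - P^m h` are bounded uniformly in `m`. By the Markov property
`E[f(X_i) f(X_{i+d})] = E[f(X_i) (P^d f)(X_i)]`, so every row of the covariance matrix of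
`f(X_0), f(X_1), …` has bounded partial sums, and `E[(∑_{i<n} f(X_i))²] = O(n)`. Along the squares
`n = k²` the second moments of the averages are summable, which gives almost sure convergence of
`Freq_{k²}(s)`; monotonicity of the counts fills in the gaps between consecutive squares.
-/

open scoped NNReal ENNReal Topology
open MeasureTheory Filter Finset Matrix

section Poisson

variable {B : Type*} [Fintype B] [DecidableEq B] {Q : Matrix B B ℝ}

lemma norm_mulVec_le_of_mem_rowStochastic (hQ : Q ∈ rowStochastic ℝ B) (x : B → ℝ) :
    ‖Q *ᵥ x‖ ≤ ‖x‖ := by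
  refine (pi_norm_le_iff_of_nonneg (norm_nonneg x)).2 fun s => ?_
  calc ‖(Q *ᵥ x) s‖ ≤ ∑ t, Q s t * ‖x t‖ := by
        simp only [mulVec, dotProduct, Real.norm_eq_abs]
        refine (abs_sum_le_sum_abs _ _).trans (sum_le_sum fun t _ => ?_)
        rw [abs_mul, abs_of_nonneg (nonneg_of_mem_rowStochastic hQ)]
    _ ≤ ∑ t, Q s t * ‖x‖ :=
        sum_le_sum fun t _ =>
          mul_le_mul_of_nonneg_left (norm_le_pi_norm x t) (nonneg_of_mem_rowStochastic hQ)
    _ = ‖x‖ := by rw [← sum_mul, sum_row_of_mem_rowStochastic hQ, one_mul]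

lemma eq_of_mulVec_eq_self_of_isMaxOn (hQ : Q ∈ rowStochastic ℝ B) {x : B → ℝ}
    (hx : Q *ᵥ x = x) {s₀ t : B} (hs₀ : IsMaxOn x Set.univ s₀) (hpos : 0 < Q s₀ t) :
    x t = x s₀ := by
  have hsum : ∑ u, Q s₀ u * (x s₀ - x u) = 0 := by
    simp only [mul_sub, sum_sub_distrib, ← sum_mul, sum_row_of_mem_rowStochastic hQ, one_mul]
    rw [← congrFun hx s₀]
    simp [mulVec, dotProduct]
  have hterm := (sum_eq_zero_iff_of_nonneg fun u _ => mul_nonneg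
    (nonneg_of_mem_rowStochastic hQ) (sub_nonneg.2 (hs₀ (Set.mem_univ u)))).1 hsum t (mem_univ t)
  linarith [(mul_eq_zero.1 hterm).resolve_left hpos.ne']

lemma eq_of_mulVec_eq_self (hQ : Q ∈ rowStochastic ℝ B) (hirr : ∀ s t, ∃ n, 0 < (Q ^ n) s t)
    {x : B → ℝ} (hx : Q *ᵥ x = x) (s t : B) : x s = x t := by
  obtain ⟨s₀, -, hs₀⟩ := exists_max_image univ x ⟨s, mem_univ s⟩
  have hpow : ∀ n, (Q ^ n) *ᵥ x = x := by
    intro n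
    induction n with
    | zero => rw [pow_zero, one_mulVec]
    | succ n ih => rw [pow_succ', ← mulVec_mulVec, ih, hx]
  have hconst : ∀ u, x u = x s₀ := fun u => by
    obtain ⟨n, hn⟩ := hirr s₀ u
    exact eq_of_mulVec_eq_self_of_isMaxOn (pow_mem hQ n) (hpow n)
      (isMaxOn_iff.2 fun v _ => hs₀ v (mem_univ v)) hn
  rw [hconst s, hconst t]

variable {J : B → ℝ}

/-- `h` is `A⁻¹ f` for the fundamental matrix `A = 1 - Q + 𝟙 Jᵀ`, whose kernel is trivial because
`J ⬝ᵥ A x = J ⬝ᵥ x` and harmonic functions are constant. -/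
lemma exists_sub_mulVec_eq (hQ : Q ∈ rowStochastic ℝ B) (hirr : ∀ s t, ∃ n, 0 < (Q ^ n) s t)
    (hJ1 : ∑ s, J s = 1) (hJ : J ᵥ* Q = J) {f : B → ℝ} (hf : J ⬝ᵥ f = 0) :
    ∃ h, h - Q *ᵥ h = f := by
  set A : Matrix B B ℝ := 1 - Q + of fun _ => J
  have hA : ∀ x, A *ᵥ x = x - Q *ᵥ x + fun _ => J ⬝ᵥ x := fun x => by
    simp only [A, add_mulVec, sub_mulVec, one_mulVec]
    rfl
  have hJA : ∀ x, J ⬝ᵥ (A *ᵥ x) = J ⬝ᵥ x := fun x => by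
    rw [hA, dotProduct_add, dotProduct_sub, dotProduct_mulVec, hJ, sub_self, zero_add]
    simp [dotProduct, ← sum_mul, hJ1]
  have hker : ∀ x, A *ᵥ x = 0 → x = 0 := by
    intro x hx
    have hJx : J ⬝ᵥ x = 0 := by rw [← hJA, hx, dotProduct_zero]
    have hharm : Q *ᵥ x = x := by
      have := hA x
      rw [hx, hJx, ← Pi.zero_def, add_zero] at this
      exact (sub_eq_zero.1 this.symm).symm
    funext t
    have : J ⬝ᵥ x = x t := by
      simp only [dotProduct, eq_of_mulVec_eq_self hQ hirr hharm _ t, ← sum_mul, hJ1, one_mul]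
    rw [← this, hJx, Pi.zero_apply]
  have hinj : Function.Injective A.mulVec := fun x y hxy =>
    sub_eq_zero.1 (hker _ (by rw [mulVec_sub, hxy, sub_self]))
  obtain ⟨h, hh⟩ := (mulVec_surjective_iff_isUnit.2 (mulVec_injective_iff_isUnit.1 hinj)) f
  have hJh : J ⬝ᵥ h = 0 := by rw [← hJA, hh, hf]
  refine ⟨h, ?_⟩
  rw [← hh, hA, hJh]
  exact (add_zero _).symm

lemma exists_norm_sum_pow_mulVec_le (hQ : Q ∈ rowStochastic ℝ B)
    (hirr : ∀ s t, ∃ n, 0 < (Q ^ n) s t) (hJ1 : ∑ s, J s = 1) (hJ : J ᵥ* Q = J) {f : B → ℝ}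
    (hf : J ⬝ᵥ f = 0) : ∃ C, ∀ m, ‖∑ d ∈ range m, Q ^ d *ᵥ f‖ ≤ C := by
  obtain ⟨h, rfl⟩ := exists_sub_mulVec_eq hQ hirr hJ1 hJ hf
  refine ⟨2 * ‖h‖, fun m => ?_⟩
  have htel : ∑ d ∈ range m, Q ^ d *ᵥ (h - Q *ᵥ h) = h - Q ^ m *ᵥ h := by
    simp only [mulVec_sub, mulVec_mulVec, ← pow_succ]
    rw [sum_range_sub' (fun d => Q ^ d *ᵥ h), pow_zero, one_mulVec]
  rw [htel, two_mul]
  exact (norm_sub_le _ _).trans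
    (add_le_add_right (norm_mulVec_le_of_mem_rowStochastic (pow_mem hQ m) h) _)

end Poisson

section FiniteValued

variable {Ω β : Type*} [MeasurableSpace Ω] [Fintype β] [MeasurableSpace β]
  [MeasurableSingletonClass β] {Y : Ω → β}

lemma measure_eq_sum_preimage_singleton_inter (μ : Measure Ω) (hY : Measurable Y) (X : Set Ω) :
    μ X = ∑ y, μ (Y ⁻¹' {y} ∩ X) := by
  rw [← Measure.restrict_apply_univ, ← Set.preimage_univ (f := Y), ← coe_univ,
    ← sum_measure_preimage_singleton _ fun y _ => hY (measurableSet_singleton y)]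
  exact sum_congr rfl fun y _ => Measure.restrict_apply (hY (measurableSet_singleton y))

lemma integral_comp_eq_sum_measureReal {μ : Measure Ω} [IsFiniteMeasure μ] (hY : Measurable Y)
    (F : β → ℝ) :
    ∫ ω, F (Y ω) ∂μ = ∑ y, μ.real (Y ⁻¹' {y}) * F y := by
  rw [← integral_map hY.aemeasurable StronglyMeasurable.of_discrete.aestronglyMeasurable,
    integral_fintype Integrable.of_finite]
  simp [map_measureReal_apply hY (measurableSet_singleton _)]

end FiniteValued

section AlmostSure

variable {Ω : Type*} [MeasurableSpace Ω] {μ : Measure Ω}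

lemma ae_tendsto_zero_of_summable_integral {g : ℕ → Ω → ℝ} (hg : ∀ k, 0 ≤ g k)
    (hint : ∀ k, Integrable (g k) μ) (hsum : Summable fun k => ∫ ω, g k ω ∂μ) :
    ∀ᵐ ω ∂μ, Tendsto (fun k => g k ω) atTop (𝓝 0) := by
  have hnorm : ∀ k, eLpNorm (g k) 1 μ = ENNReal.ofReal (∫ ω, g k ω ∂μ) := fun k => by
    rw [eLpNorm_one_eq_lintegral_enorm, ← ofReal_integral_norm_eq_lintegral_enorm (hint k)]
    simp_rw [Real.norm_of_nonneg (hg k _)]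
  have htsum : ∑' k, eLpNorm (g k) 1 μ ≠ ∞ := by
    simp_rw [hnorm, ← ENNReal.ofReal_tsum_of_nonneg (fun k => integral_nonneg (hg k)) hsum]
    exact ENNReal.ofReal_ne_top
  filter_upwards [summable_norm_of_tsum_eLpNorm_ne_top le_rfl
    (fun k => (hint k).aestronglyMeasurable) htsum] with ω hω
  exact tendsto_zero_iff_norm_tendsto_zero.2 hω.tendsto_atTop_zero

lemma ae_tendsto_div_sq_of_integral_sq_le {S : ℕ → Ω → ℝ}
    (hint : ∀ n, Integrable (fun ω => S n ω ^ 2) μ) {K : ℝ}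
    (hK : ∀ n, ∫ ω, S n ω ^ 2 ∂μ ≤ K * n) :
    ∀ᵐ ω ∂μ, Tendsto (fun k => S (k ^ 2) ω / (k ^ 2 : ℕ)) atTop (𝓝 0) := by
  have hbound : ∀ k : ℕ, ∫ ω, (S (k ^ 2) ω / (k ^ 2 : ℕ)) ^ 2 ∂μ ≤ K * (1 / (k : ℝ) ^ 2) :=
    fun k => by
      simp_rw [div_pow, integral_div]
      rcases eq_or_ne k 0 with rfl | hk
      · simp
      calc (∫ ω, S (k ^ 2) ω ^ 2 ∂μ) / ((k ^ 2 : ℕ) : ℝ) ^ 2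
          ≤ K * (k ^ 2 : ℕ) / ((k ^ 2 : ℕ) : ℝ) ^ 2 := by gcongr; exact hK _
        _ = K * (1 / (k : ℝ) ^ 2) := by field_simp; push_cast; ring
  have hsum : Summable fun k : ℕ => ∫ ω, (S (k ^ 2) ω / (k ^ 2 : ℕ)) ^ 2 ∂μ :=
    ((Real.summable_one_div_nat_pow.2 one_lt_two).mul_left K).of_nonneg_of_le
      (fun k => integral_nonneg fun ω => sq_nonneg _) hbound
  filter_upwards [ae_tendsto_zero_of_summable_integral (fun k ω => sq_nonneg _)
    (fun k => by simpa only [div_pow] using (hint _).div_const _) hsum] with ω hω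
  have habs := (Real.continuous_sqrt.tendsto 0).comp hω
  simp only [Function.comp_def, Real.sqrt_sq_eq_abs, Real.sqrt_zero] at habs
  exact tendsto_zero_iff_abs_tendsto_zero _ |>.2 habs

end AlmostSure

lemma tendsto_div_of_monotone_of_tendsto_div_sq {u : ℕ → ℝ} {l : ℝ} (hu : Monotone u)
    (hlim : Tendsto (fun k => u (k ^ 2) / (k ^ 2 : ℕ)) atTop (𝓝 l)) :
    Tendsto (fun n => u n / n) atTop (𝓝 l) := by
  refine tendsto_div_of_monotone_of_exists_subseq_tendsto_div u l hu fun a ha =>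
    ⟨fun k => k ^ 2, ?_, tendsto_pow_atTop two_ne_zero, hlim⟩
  have hratio : Tendsto (fun k : ℕ => (1 + 1 / (k : ℝ)) ^ 2) atTop (𝓝 1) := by
    simpa using ((tendsto_one_div_atTop_nhds_zero_nat (𝕜 := ℝ)).const_add 1).pow 2
  filter_upwards [hratio.eventually (ge_mem_nhds ha), eventually_ne_atTop 0] with k hk hk0
  have hk0' : (0 : ℝ) < k := by positivity
  calc (((k + 1) ^ 2 : ℕ) : ℝ) = (1 + 1 / (k : ℝ)) ^ 2 * (k ^ 2 : ℕ) := by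
        field_simp; push_cast; ring
    _ ≤ a * (k ^ 2 : ℕ) := by gcongr

lemma tendsto_card_filter_div_of_tendsto_div_sq {p : ℕ → Prop} [DecidablePred p] {a : ℝ}
    (h : Tendsto (fun k => (∑ i ∈ range (k ^ 2), ((if p i then 1 else 0) - a)) / (k ^ 2 : ℕ))
      atTop (𝓝 0)) :
    Tendsto (fun n : ℕ => (((range n).filter p).card : ℝ) / n) atTop (𝓝 a) := by
  have hcount : ∀ n : ℕ, (((range n).filter p).card : ℝ) =
      ∑ i ∈ range n, ((if p i then 1 else 0) - a) + n * a := fun n => by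
    rw [natCast_card_filter, sum_sub_distrib, sum_const, card_range, nsmul_eq_mul]
    ring
  refine tendsto_div_of_monotone_of_tendsto_div_sq (fun m n hmn => ?_) ?_
  · exact_mod_cast card_le_card (filter_subset_filter _ (range_subset_range.2 hmn))
  rw [← zero_add a]
  refine (h.add_const a).congr' ?_
  filter_upwards [eventually_ne_atTop 0] with k hk
  rw [hcount]
  field_simp

lemma sum_range_sum_range_eq_of_symm {c : ℕ → ℕ → ℝ} (hc : ∀ i j, c i j = c j i) (n : ℕ) :
    ∑ i ∈ range n, ∑ j ∈ range n, c i j =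
      2 * ∑ i ∈ range n, ∑ j ∈ Ico i n, c i j - ∑ i ∈ range n, c i i := by
  induction n with
  | zero => simp
  | succ n ih =>
    have hrow : ∀ i ∈ range (n + 1), ∑ j ∈ Ico i (n + 1), c i j = ∑ j ∈ Ico i n, c i j + c i n :=
      fun i hi => sum_Ico_succ_top (Nat.lt_succ_iff.1 (mem_range.1 hi)) _
    rw [sum_congr rfl hrow]
    simp only [sum_range_succ, sum_add_distrib, Ico_self, sum_empty, ih, hc n]
    ring

lemma sum_range_sum_range_le_of_symm {c : ℕ → ℕ → ℝ} (hc : ∀ i j, c i j = c j i) {K : ℝ}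
    (hK : ∀ i m, |∑ j ∈ Ico i m, c i j| ≤ K) (n : ℕ) :
    ∑ i ∈ range n, ∑ j ∈ range n, c i j ≤ 3 * K * n := by
  have hdiag : ∀ i, |c i i| ≤ K := fun i => by simpa using hK i (i + 1)
  rw [sum_range_sum_range_eq_of_symm hc]
  have h1 := (abs_sum_le_sum_abs _ _).trans (sum_le_sum fun i (_ : i ∈ range n) => hK i n)
  have h2 := (abs_sum_le_sum_abs _ _).trans (sum_le_sum fun i (_ : i ∈ range n) => hdiag i)
  simp only [sum_const, card_range, nsmul_eq_mul] at h1 h2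
  linarith [le_abs_self (∑ i ∈ range n, ∑ j ∈ Ico i n, c i j), neg_abs_le (∑ i ∈ range n, c i i)]

section MarkovChain

variable {B : Type*}

lemma preimage_frestrictLe_singleton (k : ℕ) (p : ℕ → B) :
    Preorder.frestrictLe (π := fun _ => B) k ⁻¹' {Preorder.frestrictLe k p} =
      {w | ∀ i ≤ k, w i = p i} := by
  ext w
  simp [funext_iff]

lemma map_toReal_pow_apply [Fintype B] [DecidableEq B] (P : Matrix B B ℝ≥0) (n : ℕ) (s t : B) :
    (P.map NNReal.toReal ^ n) s t = (P ^ n) s t :=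
  (congrFun (congrFun (Matrix.map_pow P NNReal.toRealHom n) s) t).symm

variable [MeasurableSpace B]

def IsMarkovChain (P : Matrix B B ℝ≥0) (ν : B → ℝ≥0) (μ : Measure (ℕ → B)) : Prop :=
  ∀ (k : ℕ) (p : ℕ → B), μ {w | ∀ i ≤ k, w i = p i} =
    (ν (p 0) : ℝ≥0∞) * ∏ i ∈ range k, (P (p i) (p (i + 1)) : ℝ≥0∞)

variable {P : Matrix B B ℝ≥0} {ν : B → ℝ≥0} {μ : Measure (ℕ → B)}

lemma IsMarkovChain.measure_cylinder_inter (hμ : IsMarkovChain P ν μ) (k : ℕ) (p : ℕ → B)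
    (t : B) :
    μ ({w | ∀ i ≤ k, w i = p i} ∩ {w | w (k + 1) = t}) =
      μ {w | ∀ i ≤ k, w i = p i} * P (p k) t := by
  set p' := Function.update p (k + 1) t
  have hp' : ∀ i ≤ k, p' i = p i := fun i hi => Function.update_of_ne (by omega) _ _
  have hpt : p' (k + 1) = t := Function.update_self _ _ _
  have hcyl : {w : ℕ → B | ∀ i ≤ k, w i = p i} ∩ {w | w (k + 1) = t} =
      {w | ∀ i ≤ k + 1, w i = p' i} := by
    ext w
    simp only [Set.mem_inter_iff, Set.mem_ofPred_eq, Nat.le_succ_iff, or_imp, forall_and,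
      forall_eq, Nat.succ_eq_add_one, hpt]
    exact and_congr_left' (forall₂_congr fun i hi => by rw [hp' i hi])
  rw [hcyl, hμ, hμ, prod_range_succ, ← mul_assoc, hp' 0 (Nat.zero_le _), hp' k le_rfl, hpt]
  congr 2
  exact prod_congr rfl fun i hi => by
    rw [hp' i (by simp at hi; omega), hp' (i + 1) (by simp at hi; omega)]

variable [Fintype B] [MeasurableSingletonClass B]

lemma integrable_mul_comp [IsFiniteMeasure μ] (f g : B → ℝ) (i j : ℕ) :
    Integrable (fun w : ℕ → B => f (w i) * g (w j)) μ :=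
  (Integrable.of_finite (μ := μ.map fun w : ℕ → B => (w i, w j))
    (f := fun y : B × B => f y.1 * g y.2)).comp_measurable
      ((measurable_pi_apply i).prodMk (measurable_pi_apply j))

lemma integrable_sq_sum_comp [IsFiniteMeasure μ] (f : B → ℝ) (n : ℕ) :
    Integrable (fun w : ℕ → B => (∑ i ∈ range n, f (w i)) ^ 2) μ := by
  simp_rw [sq, sum_mul_sum]
  exact integrable_finsetSum _ fun i _ => integrable_finsetSum _ fun j _ =>
    integrable_mul_comp f f i j

/-- The Markov property. -/
lemma IsMarkovChain.measure_inter_succ (hμ : IsMarkovChain P ν μ) {k : ℕ} {E : Set (ℕ → B)}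
    (hE : DependsOn (· ∈ E) (Set.Iic k)) (t : B) :
    μ (E ∩ {w | w (k + 1) = t}) = ∑ u, μ (E ∩ {w | w k = u}) * P u t := by
  set r := Preorder.frestrictLe (π := fun _ : ℕ => B) k
  have hr : Measurable r := Preorder.measurable_frestrictLe k
  have hfib : ∀ q, r ⁻¹' {q} ∩ E = ∅ ∨
      ∃ p : ℕ → B, r ⁻¹' {q} ∩ E = {w | ∀ i ≤ k, w i = p i} := by
    intro q
    refine (Set.eq_empty_or_nonempty _).imp_right fun ⟨p, hpq, hpE⟩ => ⟨p, ?_⟩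
    rw [show q = r p from hpq.symm, preimage_frestrictLe_singleton, Set.inter_eq_left]
    exact fun w hw => (hE fun i hi => (hw i hi).symm).mp hpE
  rw [measure_eq_sum_preimage_singleton_inter μ hr]
  simp_rw [measure_eq_sum_preimage_singleton_inter μ hr (E ∩ {w | w k = _}), sum_mul]
  rw [sum_comm]
  refine sum_congr rfl fun q _ => ?_
  simp only [← Set.inter_assoc]
  rcases hfib q with h | ⟨p, h⟩
  · simp [h]
  rw [h, hμ.measure_cylinder_inter, sum_eq_single (p k)]
  · have : {w : ℕ → B | ∀ i ≤ k, w i = p i} ∩ {w | w k = p k} = {w | ∀ i ≤ k, w i = p i} :=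
      Set.inter_eq_left.2 fun w hw => hw k le_rfl
    rw [this]
  · intro u _ hu
    have : {w : ℕ → B | ∀ i ≤ k, w i = p i} ∩ {w | w k = u} = ∅ :=
      Set.eq_empty_of_forall_notMem fun w hw => hu (hw.2.symm.trans (hw.1 k le_rfl))
    rw [this, measure_empty, zero_mul]
  · simp

variable [DecidableEq B]

lemma IsMarkovChain.measure_inter_add (hμ : IsMarkovChain P ν μ) (i d : ℕ) (u v : B) :
    μ ({w | w i = u} ∩ {w | w (i + d) = v}) = μ {w | w i = u} * (P ^ d) u v := by
  induction d generalizing v with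
  | zero =>
    by_cases huv : u = v
    · subst huv
      simp
    · have : {w : ℕ → B | w i = u} ∩ {w | w i = v} = ∅ :=
        Set.eq_empty_of_forall_notMem fun w hw => huv (hw.1.symm.trans hw.2)
      simp [this, one_apply_ne huv]
  | succ d ih =>
    have hE : DependsOn (· ∈ {w : ℕ → B | w i = u}) (Set.Iic (i + d)) := fun w w' h => by
      simp [h i (by simp)]
    rw [← add_assoc, hμ.measure_inter_succ hE v]
    simp_rw [ih, pow_succ, mul_apply, ENNReal.ofNNReal_finsetSum, mul_sum, ENNReal.coe_mul,
      mul_assoc]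

lemma IsMarkovChain.integral_mul_add [IsFiniteMeasure μ] (hμ : IsMarkovChain P ν μ)
    (f g : B → ℝ) (i d : ℕ) :
    ∫ w, f (w i) * g (w (i + d)) ∂μ =
      ∑ u, μ.real {w | w i = u} * f u * (P.map NNReal.toReal ^ d *ᵥ g) u := by
  have hY : Measurable fun w : ℕ → B => (w i, w (i + d)) :=
    (measurable_pi_apply i).prodMk (measurable_pi_apply _)
  have hfib : ∀ u v, (fun w : ℕ → B => (w i, w (i + d))) ⁻¹' {(u, v)} =
      {w | w i = u} ∩ {w | w (i + d) = v} := fun u v => by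
    ext
    simp
  rw [integral_comp_eq_sum_measureReal hY fun y => f y.1 * g y.2, Fintype.sum_prod_type]
  refine sum_congr rfl fun u _ => ?_
  simp only [hfib, measureReal_def, hμ.measure_inter_add, ENNReal.toReal_mul, mulVec, dotProduct,
    mul_sum, ENNReal.coe_toReal]
  refine sum_congr rfl fun v _ => ?_
  rw [map_toReal_pow_apply]
  ring

lemma IsMarkovChain.abs_sum_Ico_integral_mul_le [IsProbabilityMeasure μ]
    (hμ : IsMarkovChain P ν μ) {f : B → ℝ} {C : ℝ}
    (hC : ∀ m, ‖∑ d ∈ range m, P.map NNReal.toReal ^ d *ᵥ f‖ ≤ C) (i m : ℕ) :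
    |∑ j ∈ Ico i m, ∫ w, f (w i) * f (w j) ∂μ| ≤ ‖f‖ * C := by
  have hρ : ∑ u, μ.real {w : ℕ → B | w i = u} = 1 := by
    have h := sum_measureReal_preimage_singleton (μ := μ) (f := fun w : ℕ → B => w i) univ
      fun u _ => measurable_pi_apply i (measurableSet_singleton u)
    rwa [coe_univ, Set.preimage_univ, probReal_univ] at h
  rw [sum_Ico_eq_sum_range]
  simp_rw [hμ.integral_mul_add, sum_comm (s := range _), ← mul_sum,
    ← Finset.sum_apply _ _ fun d => P.map NNReal.toReal ^ d *ᵥ f]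
  calc _ ≤ ∑ u, μ.real {w : ℕ → B | w i = u} * (‖f‖ * C) := by
        refine (abs_sum_le_sum_abs _ _).trans (sum_le_sum fun u _ => ?_)
        rw [abs_mul, abs_mul, abs_of_nonneg measureReal_nonneg, mul_assoc]
        gcongr
        · exact norm_le_pi_norm f u
        · exact (norm_le_pi_norm _ u).trans (hC _)
    _ = ‖f‖ * C := by rw [← sum_mul, hρ, one_mul]

lemma IsMarkovChain.integral_sq_sum_le [IsProbabilityMeasure μ] (hμ : IsMarkovChain P ν μ)
    {f : B → ℝ} {C : ℝ} (hC : ∀ m, ‖∑ d ∈ range m, P.map NNReal.toReal ^ d *ᵥ f‖ ≤ C)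
    (n : ℕ) : ∫ w, (∑ i ∈ range n, f (w i)) ^ 2 ∂μ ≤ 3 * (‖f‖ * C) * n := by
  simp_rw [sq, sum_mul_sum]
  rw [integral_finsetSum _ fun i _ => integrable_finsetSum _ fun j _ =>
    integrable_mul_comp f f i j]
  simp_rw [integral_finsetSum _ fun j _ => integrable_mul_comp f f _ j]
  exact sum_range_sum_range_le_of_symm (fun i j => by simp_rw [mul_comm])
    (hμ.abs_sum_Ico_integral_mul_le hC) n

end MarkovChain

theorem freq_tendsto_invariant_ae_general {B : Type*} [Fintype B] [DecidableEq B]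
    [MeasurableSpace B] [MeasurableSingletonClass B]
    (P : Matrix B B ℝ≥0) (hP : ∀ s, ∑ t, P s t = 1)
    (hirr : ∀ s t : B, ∃ n : ℕ, 0 < (P ^ n) s t)
    (I : B → ℝ≥0) (hI1 : ∑ s, I s = 1) (hinv : ∀ t, ∑ s, I s * P s t = I t)
    (ν : B → ℝ≥0)
    (μ : MeasureTheory.Measure (ℕ → B)) [MeasureTheory.IsProbabilityMeasure μ]
    (hcyl : ∀ (k : ℕ) (p : ℕ → B),
      μ {w | ∀ i ≤ k, w i = p i} =
        (ν (p 0) : ℝ≥0∞) * ∏ i ∈ Finset.range k, (P (p i) (p (i + 1)) : ℝ≥0∞)) :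
    μ {w : ℕ → B | ∀ s : B, Filter.Tendsto
        (fun n : ℕ => (((Finset.range n).filter fun i => w i = s).card : ℝ) / n)
        Filter.atTop (nhds (I s : ℝ))} = 1 := by
  set Q := P.map NNReal.toReal
  set J : B → ℝ := fun s => I s
  have hQ : Q ∈ rowStochastic ℝ B := mem_rowStochastic_iff_sum.2
    ⟨fun s t => (P s t).2, fun s => by simpa [Q] using congrArg NNReal.toReal (hP s)⟩
  have hQirr : ∀ s t, ∃ n, 0 < (Q ^ n) s t := fun s t =>
    (hirr s t).imp fun n hn => by rw [map_toReal_pow_apply]; exact_mod_cast hn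
  have hJ1 : ∑ s, J s = 1 := by simpa [J] using congrArg NNReal.toReal hI1
  have hJ : J ᵥ* Q = J := funext fun t => by
    simpa [J, Q, vecMul, dotProduct] using congrArg NNReal.toReal (hinv t)
  have hstate : ∀ s, ∀ᵐ w ∂μ, Tendsto
      (fun n : ℕ => (((range n).filter fun i => w i = s).card : ℝ) / n) atTop (𝓝 (J s)) := by
    intro s
    set f : B → ℝ := fun u => (if u = s then 1 else 0) - J s
    have hf : J ⬝ᵥ f = 0 := by simp [f, dotProduct, mul_sub, ← sum_mul, hJ1]
    obtain ⟨C, hC⟩ := exists_norm_sum_pow_mulVec_le hQ hQirr hJ1 hJ hf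
    filter_upwards [ae_tendsto_div_sq_of_integral_sq_le (integrable_sq_sum_comp f)
      (IsMarkovChain.integral_sq_sum_le hcyl hC)] with w hw
    exact tendsto_card_filter_div_of_tendsto_div_sq hw
  exact (measure_congr (ae_eq_univ.2 (ae_all_iff.2 hstate))).trans measure_univ

/-- ergodic theorem for finite irreducible Markov chains.
For any Markov-chain measure on runs with irreducible transition matrix `P`
and any initial distribution `ν`, the empirical frequency vector converges
almost surely to the unique invariant distribution `I`. -/
theorem freq_tendsto_invariant_ae {B : Type*} [Fintype B] [Nonempty B] [DecidableEq B]
    [MeasurableSpace B] [MeasurableSingletonClass B]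
    (P : Matrix B B ℝ≥0) (hP : ∀ s, ∑ t, P s t = 1)
    (hirr : ∀ s t : B, ∃ n : ℕ, 0 < (P ^ n) s t)
    (I : B → ℝ≥0) (hI1 : ∑ s, I s = 1) (hinv : ∀ t, ∑ s, I s * P s t = I t)
    (ν : B → ℝ≥0) (hν : ∑ s, ν s = 1)
    (μ : MeasureTheory.Measure (ℕ → B)) [MeasureTheory.IsProbabilityMeasure μ]
    (hcyl : ∀ (k : ℕ) (p : ℕ → B),
      μ {w | ∀ i ≤ k, w i = p i} =
        (ν (p 0) : ℝ≥0∞) * ∏ i ∈ Finset.range k, (P (p i) (p (i + 1)) : ℝ≥0∞)) :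
    μ {w : ℕ → B | ∀ s : B, Filter.Tendsto
        (fun n : ℕ => (((Finset.range n).filter fun i => w i = s).card : ℝ) / n)
        Filter.atTop (nhds (I s : ℝ))} = 1 :=
  freq_tendsto_invariant_ae_general P hP hirr I hI1 hinv ν μ hcyl
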